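/- Let P be an atomic abstract simplex path of dimension n ≥ 2 with a summit at an odd position i (2 ≤ i ≤ k−1, h_i(P) > h_{i±1}(P)), normalized so that (C_{i-1},V_{i-1}) = (0,1), (C_i,V_i) = (1,0), and R^i(P)_2 = 0. Let P̃ = P(i, D, Q) be the summit-move vertex expansion with D = (0,0,0, ¬R^i(P)_3,...,¬R^i(P)_n) and Q = (0,1,2,0,2,1). Then P̃ is admissible: if h_i(P) ≥ 3 then P̃ is atomic, and if h_i(P) = 2 then P̃ is the concatenation of the two atomic paths P̃[1, i+1] and P̃[i+2, k+4]. -/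

import Mathlib

/-- Data of an abstract simplex path of dimension `n`: the vertices (colors) of the
`n`-simplex are indexed by `Fin (n+1)`; `C` and `V` are indexed by positive naturals
(positions `1,…,k-1` are the relevant ones for a path of length `k`). -/
structure SPath (n : ℕ) where
  I : Fin (n + 1) → Bool
  C : ℕ → Fin (n + 1)
  V : ℕ → Bool

namespace SPath

variable {n : ℕ}

/-- The `j`-th simplex `R^j(P)` of the path, defined via the last-occurrence rule. -/
def R (P : SPath n) (j : ℕ) (i : Fin (n + 1)) : Bool :=
  if h : ((Finset.Icc 1 (j - 1)).filter fun m => P.C m = i).Nonempty then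
    P.V (((Finset.Icc 1 (j - 1)).filter fun m => P.C m = i).max' h)
  else P.I i

/-- The height `h_j(P)` of the `j`-th simplex: the number of `1`-entries. -/
def height (P : SPath n) (j : ℕ) : ℕ :=
  (Finset.univ.filter fun i : Fin (n + 1) => P.R j i = true).card

/-- The no-back-flip condition for a path of length `k`. -/
def NoBackFlip (P : SPath n) (k : ℕ) : Prop :=
  ∀ i, 1 ≤ i → i + 1 ≤ k - 1 → P.C i ≠ P.C (i + 1)

/-- A boolean `[n]`-tuple is monochromatic. -/
def Mono (f : Fin (n + 1) → Bool) : Prop := ∃ b, ∀ i, f i = b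

/-- `P` is an atomic path of length `k`. -/
def Atomic (P : SPath n) (k : ℕ) : Prop :=
  NoBackFlip P k ∧ Even k ∧ 2 ≤ k ∧
    (∀ i, P.R 1 i = false) ∧ (∀ i, P.R k i = false) ∧
    ∀ j, 1 < j → j < k → ¬Mono (P.R j)

/-- The subpath of `P` starting at position `a` (the subpath `P[a,b]` has length `b+1-a`). -/
def sub (P : SPath n) (a : ℕ) : SPath n :=
  ⟨fun i => P.R a i, fun m => P.C (a - 1 + m), fun m => P.V (a - 1 + m)⟩

/-- `P` (of length `k`) is admissible: a concatenation of atomic paths. -/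
def Admissible (P : SPath n) (k : ℕ) : Prop :=
  ∃ (r : ℕ) (a : ℕ → ℕ), 1 ≤ r ∧ a 0 = 0 ∧ a r = k ∧
    (∀ s, s < r → a s < a (s + 1)) ∧
    ∀ s, s < r → Atomic (P.sub (a s + 1)) (a (s + 1) - a s)

/-- A `0`-path of length `k`: zero initial simplex and all `V`-values `0`. -/
def IsZeroPath (P : SPath n) (k : ℕ) : Prop :=
  (∀ i, P.I i = false) ∧ ∀ j, 1 ≤ j → j + 1 ≤ k → P.V j = false

end SPath

/-- Number of occurrences of `l` among `(Q a, …, Q b)`. -/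
def cnt {n : ℕ} (Q : ℕ → Fin (n + 1)) (a b : ℕ) (l : Fin (n + 1)) : ℕ :=
  ((Finset.Icc a b).filter fun m => Q m = l).card

/-- The tuple `(Q 1, …, Q t)` describes an `[n]`-cube loop. -/
def IsCubeLoop {n : ℕ} (Q : ℕ → Fin (n + 1)) (t : ℕ) : Prop :=
  1 ≤ t ∧ (∀ l, Even (cnt Q 1 t l)) ∧
    ∀ i j, 1 ≤ i → i < j → j ≤ t → (i, j) ≠ (1, t) → ∃ l, ¬Even (cnt Q i j l)

/-- The tuple `(Q 1, …, Q t)` together with the split `s` describes an `[n]`-cube `p`-path. -/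
def IsCubePath {n : ℕ} (p : Fin (n + 1)) (Q : ℕ → Fin (n + 1)) (t s : ℕ) : Prop :=
  1 ≤ s ∧ s < t ∧ (∀ m, 1 ≤ m → m ≤ t → Q m ≠ p) ∧
    (∀ l, l ≠ p → Even (cnt Q 1 t l)) ∧
    (∀ i j, 1 ≤ i → i < j → j ≤ s → ∃ l, ¬Even (cnt Q i j l)) ∧
    ∀ i j, s + 1 ≤ i → i < j → j ≤ t → ∃ l, ¬Even (cnt Q i j l)

namespace SPath

variable {n : ℕ}

/-- The labels `w_i` used in the vertex and edge expansions. -/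
def w (P : SPath n) (m : ℕ) (D : Fin (n + 1) → Bool) (Q : ℕ → Fin (n + 1)) (i : ℕ) : Bool :=
  if Even (cnt Q 1 i (Q i)) then P.R m (Q i) else D (Q i)

/-- The vertex expansion `P(m, D, Q)` for a cube loop `Q` of length `t`. -/
def vexp (P : SPath n) (m : ℕ) (D : Fin (n + 1) → Bool) (Q : ℕ → Fin (n + 1)) (t : ℕ) :
    SPath n where
  I := P.I
  C := fun j =>
    if j ≤ m - 1 then P.C j
    else if j ≤ m + t - 3 then Q (j + 2 - m)
    else P.C (j + 2 - t)
  V := fun j =>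
    if j ≤ m - 2 then P.V j
    else if j ≤ m + t - 3 then P.w m D Q (j + 2 - m)
    else P.V (j + 2 - t)

/-- The edge expansion `P(m, D, Q, s)` for a cube path `Q` of length `t` with split `s`. -/
def eexp (P : SPath n) (m : ℕ) (D : Fin (n + 1) → Bool) (Q : ℕ → Fin (n + 1)) (t s : ℕ) :
    SPath n where
  I := P.I
  C := fun j =>
    if j ≤ m - 1 then P.C j
    else if j ≤ m + s - 2 then Q (j + 2 - m)
    else if j = m + s - 1 then P.C m
    else if j ≤ m + t - 2 then Q (j + 1 - m)
    else P.C (j + 2 - t)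
  V := fun j =>
    if j ≤ m - 2 then P.V j
    else if j ≤ m + s - 2 then P.w m D Q (j + 2 - m)
    else if j = m + s - 1 then P.V m
    else if j ≤ m + t - 2 then P.w m D Q (j + 1 - m)
    else P.V (j + 2 - t)

/-- Two cube vertices differ in exactly one coordinate. -/
def Adjacent (α β : Fin (n + 1) → Bool) : Prop := ∃! l, α l ≠ β l

/-- Membership in `M(A)` for the `2 × (n+1)` array with rows `A0` and `A1`. -/
def MemMA (A0 A1 : Fin (n + 1) → Bool) (α : Fin (n + 1) → Bool) : Prop :=
  ∃ b, ∀ l, (if α l then A1 l else A0 l) = b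

/-- The vertex expansion with data `(m, D, Q)` (loop length `t`) is exhaustive. -/
def ExhVertex (P : SPath n) (m t : ℕ) (D : Fin (n + 1) → Bool) (Q : ℕ → Fin (n + 1)) : Prop :=
  ∃ f : (Fin (n + 1) → Bool) → Fin (n + 1) → Bool,
    ∀ α, MemMA (P.R m) D α →
      (f α ≠ α → MemMA (P.R m) D (f α) ∧ f (f α) = α ∧ Adjacent α (f α)) ∧
      (f α = α → ∃ i, 1 ≤ i ∧ i ≤ t - 1 ∧
        ∀ j, α j = true ↔ ¬Even (cnt Q 1 i j))

/-- The edge expansion with data `(m, D, Q, s)` (length `t`) is exhaustive. -/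
def ExhEdge (P : SPath n) (m t s : ℕ) (D : Fin (n + 1) → Bool) (Q : ℕ → Fin (n + 1)) : Prop :=
  ∃ f : (Fin (n + 1) → Bool) → Fin (n + 1) → Bool,
    ∀ α, MemMA (P.R m) (fun l => if l = P.C m then P.V m else D l) α →
      (f α ≠ α →
        MemMA (P.R m) (fun l => if l = P.C m then P.V m else D l) (f α) ∧
          f (f α) = α ∧ Adjacent α (f α)) ∧
      (f α = α → ∃ i,
        ((α (P.C m) = false ∧ 1 ≤ i ∧ i ≤ s) ∨ (α (P.C m) = true ∧ s + 1 ≤ i ∧ i ≤ t)) ∧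
        ∀ j, j ≠ P.C m → (α j = true ↔ ¬Even (cnt Q 1 i j)))

/-- `(P', k')` is obtained from `(P, k)` by a finite sequence of exhaustive
vertex and edge expansions. -/
inductive Reduces : SPath n → ℕ → SPath n → ℕ → Prop where
  | refl (P : SPath n) (k : ℕ) : Reduces P k P k
  | vstep (P : SPath n) (k m t : ℕ) (D : Fin (n + 1) → Bool) (Q : ℕ → Fin (n + 1))
      (P' : SPath n) (k' : ℕ) :
      2 ≤ m → m + 1 ≤ k → IsCubeLoop Q t → Q 1 = P.C (m - 1) → Q t = P.C m →
      ExhVertex P m t D Q →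
      Reduces (P.vexp m D Q t) (k + t - 2) P' k' → Reduces P k P' k'
  | estep (P : SPath n) (k m t s : ℕ) (D : Fin (n + 1) → Bool) (Q : ℕ → Fin (n + 1))
      (P' : SPath n) (k' : ℕ) :
      2 ≤ m → m + 2 ≤ k → IsCubePath (P.C m) Q t s → Q 1 = P.C (m - 1) → Q t = P.C (m + 1) →
      ExhEdge P m t s D Q →
      Reduces (P.eexp m D Q t s) (k + t - 2) P' k' → Reduces P k P' k'

/-- `P` is reducible: some finite sequence of exhaustive vertex and edge
expansions transforms it into a `0`-path. -/
def Reducible (P : SPath n) (k : ℕ) : Prop :=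
  ∃ P' k', Reduces P k P' k' ∧ IsZeroPath P' k'

end SPath


/-- The label tuple `D = (0, 0, 0, ¬e_3^i, …, ¬e_n^i)` of the summit move. -/
def summitD {n : ℕ} (P : SPath n) (i : ℕ) : Fin (n + 1) → Bool :=
  fun l => if (l : ℕ) ≤ 2 then false else !P.R i l

/-- The `[n]`-cube loop `Q = (0, 1, 2, 0, 2, 1)` of the summit move. -/
def summitQ (n : ℕ) : ℕ → Fin (n + 1) := fun m =>
  if m = 1 then 0 else if m = 2 then 1 else if m = 3 then 2
  else if m = 4 then 0 else if m = 5 then 2 else 1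

/-!
Write `e = R^i(P)`. The summit move replaces the single move `(C_{i-1}, V_{i-1}) = (0, 1)`
by the moves `(0, 0), (1, 0), (2, 0), (0, e_0), (2, e_2)`, and then continues with the moves of
`P` from position `i` on. Since `e_0 = 1` (the move into the summit sets colour `0`) and
`e_2 = 0`, the simplices of `P̃` at positions `i, …, i + 5` are `e` with colour `0` cleared,
`e` with colours `0, 1` cleared (twice), `e` with colour `1` cleared (twice), and `R^{i+1}(P)`;
from there on `P̃` is `P` shifted by four positions. The summit condition `h_{i+1} < h_i`
forces `e_1 = 1`, so every new simplex is non-monochromatic except possibly `e` with colours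
`0, 1` cleared, which has `h_i - 2` ones: for `h_i ≥ 3` it is non-monochromatic and `P̃` is
atomic, for `h_i = 2` it is the zero simplex and cuts `P̃` into two atomic paths. The colours
`0, 1, 2, 0, 2, 1` at positions `i - 1, …, i + 4` never repeat consecutively, so no back-flip
is created.
-/

open Function

namespace SPath

variable {n : ℕ}

theorem R_one (P : SPath n) : P.R 1 = P.I := by
  funext l
  simp [R]

theorem R_succ (P : SPath n) {j : ℕ} (hj : 1 ≤ j) :
    P.R (j + 1) = update (P.R j) (P.C j) (P.V j) := by
  funext l
  obtain ⟨j, rfl⟩ := Nat.exists_eq_add_of_le' hj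
  rw [R, Nat.add_sub_cancel,
    ← Finset.insert_Icc_right_eq_Icc_add_one (by omega), Finset.filter_insert]
  by_cases hl : P.C (j + 1) = l
  · subst hl
    rw [if_pos rfl, dif_pos (Finset.insert_nonempty _ _), update_self]
    congr
    refine le_antisymm (Finset.max'_le _ _ _ fun m hm => ?_) (Finset.le_max' _ _ (by simp))
    rcases Finset.mem_insert.1 hm with rfl | hm
    · rfl
    · have := (Finset.mem_filter.1 hm).1
      simp only [Finset.mem_Icc] at this
      omega
  · rw [if_neg hl, update_of_ne (Ne.symm hl), R, Nat.add_sub_cancel]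

theorem R_succ_apply_C (P : SPath n) {j : ℕ} (hj : 1 ≤ j) :
    P.R (j + 1) (P.C j) = P.V j := by
  rw [R_succ P hj, update_self]

theorem R_eq_update_pred (P : SPath n) {j : ℕ} (hj : 2 ≤ j) :
    P.R j = update (P.R (j - 1)) (P.C (j - 1)) (P.V (j - 1)) := by
  obtain ⟨j, rfl⟩ := Nat.exists_eq_add_of_le' hj
  exact P.R_succ (j := j + 1) (by omega)

theorem R_congr {P P' : SPath n} {j : ℕ} (hI : P'.I = P.I)
    (hC : ∀ m, 1 ≤ m → m < j → P'.C m = P.C m) (hV : ∀ m, 1 ≤ m → m < j → P'.V m = P.V m) :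
    P'.R j = P.R j := by
  induction j with
  | zero => funext l; simp [R, hI]
  | succ j ih =>
    rcases Nat.eq_zero_or_pos j with rfl | hj
    · rw [R_one, R_one, hI]
    · rw [R_succ _ hj, R_succ _ hj, ih (fun m h1 h2 => hC m h1 (by omega))
        (fun m h1 h2 => hV m h1 (by omega)), hC j hj (by omega), hV j hj (by omega)]

theorem R_add_congr {P P' : SPath n} {a b : ℕ} (ha : 1 ≤ a) (hb : 1 ≤ b) (h₀ : P'.R a = P.R b)
    {d : ℕ} (hC : ∀ m < d, P'.C (a + m) = P.C (b + m))
    (hV : ∀ m < d, P'.V (a + m) = P.V (b + m)) :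
    P'.R (a + d) = P.R (b + d) := by
  induction d with
  | zero => exact h₀
  | succ d ih =>
    rw [← add_assoc, ← add_assoc, R_succ _ (by omega), R_succ _ (by omega),
      ih (fun m hm => hC m (by omega)) (fun m hm => hV m (by omega)), hC d (by omega),
      hV d (by omega)]

theorem sub_R (P : SPath n) {a j : ℕ} (ha : 1 ≤ a) (hj : 1 ≤ j) :
    (P.sub a).R j = P.R (a - 1 + j) := by
  obtain ⟨d, rfl⟩ := Nat.exists_eq_add_of_le hj
  rw [show a - 1 + (1 + d) = a + d by omega]
  exact R_add_congr le_rfl ha (R_one _) (fun m _ => congrArg P.C (by omega))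
    (fun m _ => congrArg P.V (by omega))

theorem sub_one (P : SPath n) : P.sub 1 = P := by
  rcases P with ⟨I, C, V⟩
  simp [sub, R_one]

theorem not_mono_of_ne {f : Fin (n + 1) → Bool} {a b : Fin (n + 1)} (h : f a ≠ f b) :
    ¬Mono f :=
  fun ⟨_, hc⟩ => h ((hc a).trans (hc b).symm)

theorem R_apply_C_of_height_succ_lt (P : SPath n) {j : ℕ} (hj : 1 ≤ j)
    (h : P.height (j + 1) < P.height j) : P.R j (P.C j) = true := by
  by_contra hf
  refine h.not_ge (Finset.card_le_card fun l hl => ?_)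
  simp only [Finset.mem_filter, Finset.mem_univ, true_and] at hl ⊢
  rw [R_succ _ hj, update_apply]
  split_ifs with hlC
  · exact absurd (hlC ▸ hl) hf
  · exact hl

/-- The subpath `P[a, b]` is atomic, with the conditions read off in the positions of `P`. -/
def AtomicOn (P : SPath n) (a b : ℕ) : Prop :=
  (∀ j, a ≤ j → j + 1 < b → P.C j ≠ P.C (j + 1)) ∧ Even (b + 1 - a) ∧ a < b ∧
    (∀ l, P.R a l = false) ∧ (∀ l, P.R b l = false) ∧ ∀ j, a < j → j < b → ¬Mono (P.R j)

theorem atomic_sub_iff {P : SPath n} {a b : ℕ} (ha : 1 ≤ a) :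
    (P.sub a).Atomic (b + 1 - a) ↔ P.AtomicOn a b := by
  rcases le_or_gt b a with hba | hab
  · simp only [Atomic, AtomicOn]
    omega
  have hR : ∀ j, 1 ≤ j → (P.sub a).R j = P.R (a - 1 + j) := fun j hj => P.sub_R ha hj
  refine and_congr
    ⟨fun h j hj₁ hj₂ => ?_, fun h j hj₁ hj₂ => h (a - 1 + j) (by omega) (by omega)⟩
    (and_congr Iff.rfl (and_congr (by omega) (and_congr ?_ (and_congr ?_ ?_))))
  · have := h (j + 1 - a) (by omega) (by omega)
    simpa [sub, show a - 1 + (j + 1 - a) = j by omega,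
      show a - 1 + (j + 1 - a + 1) = j + 1 by omega] using this
  · rw [hR 1 le_rfl, Nat.sub_add_cancel ha]
  · rw [hR _ (by omega), show a - 1 + (b + 1 - a) = b by omega]
  · refine ⟨fun h j hj₁ hj₂ => ?_, fun h j hj₁ hj₂ => ?_⟩
    · simpa [hR (j + 1 - a) (by omega), show a - 1 + (j + 1 - a) = j by omega]
        using h (j + 1 - a) (by omega) (by omega)
    · rw [hR j (by omega)]
      exact h _ (by omega) (by omega)

theorem atomicOn_one_iff {P : SPath n} {k : ℕ} : P.AtomicOn 1 k ↔ P.Atomic k := by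
  rw [← atomic_sub_iff le_rfl, sub_one, Nat.add_sub_cancel]

theorem AtomicOn.admissible {P : SPath n} {k : ℕ} (h : P.AtomicOn 1 k) : P.Admissible k := by
  refine ⟨1, fun s => s * k, le_rfl, zero_mul k, one_mul k, fun s hs => ?_, fun s hs => ?_⟩ <;>
    obtain rfl : s = 0 := by omega
  · simpa using h.2.2.1.trans' zero_lt_one
  · simpa [sub_one] using atomicOn_one_iff.1 h

theorem AtomicOn.admissible_append {P : SPath n} {m k : ℕ} (h₁ : P.AtomicOn 1 m)
    (h₂ : P.AtomicOn (m + 1) k) : P.Admissible k := by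
  refine ⟨2, fun s => if s = 0 then 0 else if s = 1 then m else k, by norm_num, rfl, rfl,
    fun s hs => ?_, fun s hs => ?_⟩ <;> interval_cases s
  · simpa using h₁.2.2.1.trans' zero_lt_one
  · simpa using (Nat.lt_succ_self m).trans h₂.2.2.1
  · simpa using (atomic_sub_iff le_rfl).2 h₁
  · simpa using (atomic_sub_iff (by omega)).2 h₂

section VertexExpansion

variable (P : SPath n) {m t : ℕ} (D : Fin (n + 1) → Bool) (Q : ℕ → Fin (n + 1))

theorem vexp_C_of_le {j : ℕ} (h : j ≤ m - 1) : (P.vexp m D Q t).C j = P.C j := if_pos h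

theorem vexp_V_of_le {j : ℕ} (h : j ≤ m - 2) : (P.vexp m D Q t).V j = P.V j := if_pos h

theorem vexp_C_loop (hm : 1 ≤ m) {r : ℕ} (hr : r + 3 ≤ t) :
    (P.vexp m D Q t).C (m + r) = Q (r + 2) := by
  dsimp only [vexp]
  rw [if_neg (by omega), if_pos (by omega), show m + r + 2 - m = r + 2 by omega]

theorem vexp_V_loop (hm : 2 ≤ m) {r : ℕ} (hr : r + 2 ≤ t) :
    (P.vexp m D Q t).V (m + r - 1) = P.w m D Q (r + 1) := by
  dsimp only [vexp]
  rw [if_neg (by omega), if_pos (by omega), show m + r - 1 + 2 - m = r + 1 by omega]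

theorem vexp_C_add (hm : 1 ≤ m) (ht : 2 ≤ t) {j : ℕ} (hj : m ≤ j) :
    (P.vexp m D Q t).C (j + (t - 2)) = P.C j := by
  dsimp only [vexp]
  rw [if_neg (by omega), if_neg (by omega), show j + (t - 2) + 2 - t = j by omega]

theorem vexp_V_add (hm : 1 ≤ m) (ht : 2 ≤ t) {j : ℕ} (hj : m ≤ j) :
    (P.vexp m D Q t).V (j + (t - 2)) = P.V j := by
  dsimp only [vexp]
  rw [if_neg (by omega), if_neg (by omega), show j + (t - 2) + 2 - t = j by omega]

theorem vexp_R_of_le {j : ℕ} (h : j ≤ m - 1) : (P.vexp m D Q t).R j = P.R j :=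
  R_congr rfl (fun _ _ hl => P.vexp_C_of_le D Q (by omega))
    (fun _ _ hl => P.vexp_V_of_le D Q (by omega))

end VertexExpansion

end SPath

theorem cnt_succ {n : ℕ} (Q : ℕ → Fin (n + 1)) {a b : ℕ} (h : a ≤ b + 1) (l : Fin (n + 1)) :
    cnt Q a (b + 1) l = cnt Q a b l + if Q (b + 1) = l then 1 else 0 := by
  rw [cnt, cnt, ← Finset.insert_Icc_right_eq_Icc_add_one h, Finset.filter_insert]
  split_ifs
  · rw [Finset.card_insert_of_notMem (by simp)]
  · rfl

theorem cnt_of_lt {n : ℕ} (Q : ℕ → Fin (n + 1)) {a b : ℕ} (h : b < a) (l : Fin (n + 1)) :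
    cnt Q a b l = 0 := by
  simp [cnt, Finset.Icc_eq_empty_of_lt h]

theorem card_filter_update_false_add_one {α : Type*} [Fintype α] [DecidableEq α] {f : α → Bool}
    {a : α} (ha : f a = true) :
    (Finset.univ.filter fun l => update f a false l = true).card + 1 =
      (Finset.univ.filter fun l => f l = true).card := by
  have : (Finset.univ.filter fun l => update f a false l = true) =
      (Finset.univ.filter fun l => f l = true).erase a := by
    ext l
    by_cases hl : l = a <;> simp [update_apply, hl]
  rw [this, Finset.card_erase_add_one (by simpa)]

section SummitMove

open SPath

variable {n : ℕ}

abbrev summitMove (P : SPath n) (i : ℕ) : SPath n := P.vexp i (summitD P i) (summitQ n) 6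

structure IsNormalizedSummit (P : SPath (n + 2)) (i : ℕ) : Prop where
  two_le : 2 ≤ i
  C_pred : P.C (i - 1) = 0
  C_self : P.C i = 1
  R_zero : P.R i 0 = true
  R_one : P.R i 1 = true
  R_two : P.R i 2 = false

theorem summit_w_of_le_three (P : SPath (n + 2)) (i : ℕ) {s : ℕ} (hs₁ : 1 ≤ s)
    (hs₃ : s ≤ 3) : P.w i (summitD P i) (summitQ (n + 2)) s = false := by
  interval_cases s <;>
    simp [w, cnt_succ, cnt_of_lt, summitQ, summitD, Fin.ext_iff, Nat.mod_eq_of_lt]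

theorem summit_w_four (P : SPath (n + 2)) (i : ℕ) :
    P.w i (summitD P i) (summitQ (n + 2)) 4 = P.R i 0 := by
  simp [w, cnt_succ, cnt_of_lt, summitQ, Fin.ext_iff, Nat.mod_eq_of_lt]

theorem summit_w_five (P : SPath (n + 2)) (i : ℕ) :
    P.w i (summitD P i) (summitQ (n + 2)) 5 = P.R i 2 := by
  simp [w, cnt_succ, cnt_of_lt, summitQ, Fin.ext_iff, Nat.mod_eq_of_lt]

theorem summitMove_C_loop (P : SPath n) {i : ℕ} (hi : 1 ≤ i) :
    (summitMove P i).C i = 1 ∧ (summitMove P i).C (i + 1) = 2 ∧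
      (summitMove P i).C (i + 2) = 0 ∧ (summitMove P i).C (i + 3) = 2 :=
  ⟨vexp_C_loop P _ _ (r := 0) hi (by norm_num), vexp_C_loop P _ _ (r := 1) hi (by norm_num),
    vexp_C_loop P _ _ (r := 2) hi (by norm_num), vexp_C_loop P _ _ (r := 3) hi (by norm_num)⟩

theorem summitMove_V_loop (P : SPath (n + 2)) {i : ℕ} (hi : 2 ≤ i) :
    (summitMove P i).V (i - 1) = false ∧ (summitMove P i).V i = false ∧
      (summitMove P i).V (i + 1) = false ∧ (summitMove P i).V (i + 2) = P.R i 0 ∧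
      (summitMove P i).V (i + 3) = P.R i 2 := by
  refine ⟨?_, ?_, ?_, ?_, ?_⟩
  · exact (vexp_V_loop P _ _ (r := 0) hi (by norm_num)).trans
      (summit_w_of_le_three P i le_rfl (by norm_num))
  · exact (vexp_V_loop P _ _ (r := 1) hi (by norm_num)).trans
      (summit_w_of_le_three P i (by norm_num) (by norm_num))
  · exact (vexp_V_loop P _ _ (r := 2) hi (by norm_num)).trans
      (summit_w_of_le_three P i (by norm_num) le_rfl)
  · exact (vexp_V_loop P _ _ (r := 3) hi (by norm_num)).trans (summit_w_four P i)
  · exact (vexp_V_loop P _ _ (r := 4) hi (by norm_num)).trans (summit_w_five P i)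

theorem summitMove_C_add_four (P : SPath n) {i j : ℕ} (hi : 1 ≤ i) (hj : i ≤ j) :
    (summitMove P i).C (j + 4) = P.C j :=
  vexp_C_add P _ _ hi (by norm_num) hj

theorem summitMove_V_add_four (P : SPath n) {i j : ℕ} (hi : 1 ≤ i) (hj : i ≤ j) :
    (summitMove P i).V (j + 4) = P.V j :=
  vexp_V_add P _ _ hi (by norm_num) hj

namespace IsNormalizedSummit

variable {P : SPath (n + 2)} {i : ℕ}

theorem one_le (h : IsNormalizedSummit P i) : 1 ≤ i :=
  one_le_two.trans h.two_le

theorem summitMove_R_self (h : IsNormalizedSummit P i) :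
    (summitMove P i).R i = update (P.R i) 0 false := by
  rw [R_eq_update_pred _ h.two_le, R_eq_update_pred P h.two_le, vexp_R_of_le _ _ _ le_rfl,
    vexp_C_of_le _ _ _ le_rfl, (summitMove_V_loop P h.two_le).1, h.C_pred, update_idem]

theorem summitMove_R_succ_self (h : IsNormalizedSummit P i) :
    (summitMove P i).R (i + 1) = update (update (P.R i) 0 false) 1 false := by
  rw [R_succ _ (h.one_le), h.summitMove_R_self,
    (summitMove_C_loop P h.one_le).1, (summitMove_V_loop P h.two_le).2.1]

theorem summitMove_R_add_two (h : IsNormalizedSummit P i) :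
    (summitMove P i).R (i + 2) = (summitMove P i).R (i + 1) := by
  rw [R_succ _ (by omega : 1 ≤ i + 1), (summitMove_C_loop P h.one_le).2.1,
    (summitMove_V_loop P h.two_le).2.2.1, update_eq_self_iff, h.summitMove_R_succ_self]
  simp [Fin.ext_iff, Nat.mod_eq_of_lt, h.R_two]

theorem summitMove_R_add_three (h : IsNormalizedSummit P i) :
    (summitMove P i).R (i + 3) = update (P.R i) 1 false := by
  rw [R_succ _ (by omega : 1 ≤ i + 2), h.summitMove_R_add_two, h.summitMove_R_succ_self,
    (summitMove_C_loop P h.one_le).2.2.1, (summitMove_V_loop P h.two_le).2.2.2.1,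
    update_comm (by simp), update_idem, update_eq_self]

theorem summitMove_R_add_four (h : IsNormalizedSummit P i) :
    (summitMove P i).R (i + 4) = update (P.R i) 1 false := by
  rw [R_succ _ (by omega : 1 ≤ i + 3), h.summitMove_R_add_three,
    (summitMove_C_loop P h.one_le).2.2.2, (summitMove_V_loop P h.two_le).2.2.2.2,
    update_eq_self_iff, update_of_ne (by simp [Fin.ext_iff, Nat.mod_eq_of_lt])]

theorem summitMove_R_add_four_of_lt (h : IsNormalizedSummit P i) {j : ℕ} (hj : i < j) :
    (summitMove P i).R (j + 4) = P.R j := by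
  have hi := h.one_le
  have h₅ : (summitMove P i).R (i + 5) = P.R (i + 1) := by
    rw [R_succ _ (by omega : 1 ≤ i + 4), h.summitMove_R_add_four,
      summitMove_C_add_four P hi le_rfl, summitMove_V_add_four P hi le_rfl, h.C_self,
      update_idem, R_succ _ hi, h.C_self]
  obtain ⟨d, rfl⟩ := Nat.exists_eq_add_of_le hj
  rw [show i + 1 + d + 4 = i + 5 + d by omega]
  refine R_add_congr (by omega) (by omega) h₅ (fun m _ => ?_) (fun m _ => ?_)
  · rw [show i + 5 + m = i + 1 + m + 4 by omega]
    exact summitMove_C_add_four P hi (by omega)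
  · rw [show i + 5 + m = i + 1 + m + 4 by omega]
    exact summitMove_V_add_four P hi (by omega)

theorem summitMove_noBackFlip (h : IsNormalizedSummit P i) {k : ℕ} (hP : P.NoBackFlip k)
    (hik : i < k) : (summitMove P i).NoBackFlip (k + 4) := by
  have hi := h.one_le
  obtain ⟨hC₀, hC₁, hC₂, hC₃⟩ := summitMove_C_loop P hi
  intro j hj₁ hj₂
  rcases lt_or_ge (j + 1) i with hji | hij
  · rw [vexp_C_of_le _ _ _ (by omega), vexp_C_of_le _ _ _ (by omega)]
    exact hP j hj₁ (by omega)
  rcases lt_or_ge j (i + 4) with hji' | hij'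
  · obtain rfl | rfl | rfl | rfl | rfl :
        j = i - 1 ∨ j = i ∨ j = i + 1 ∨ j = i + 2 ∨ j = i + 3 := by omega
    · rw [vexp_C_of_le _ _ _ le_rfl, h.C_pred, Nat.sub_add_cancel hi, hC₀]
      simp
    all_goals
      simp only [hC₀, hC₁, hC₂, hC₃, add_assoc, Nat.reduceAdd,
        summitMove_C_add_four P hi le_rfl, h.C_self]
      simp [Fin.ext_iff, Nat.mod_eq_of_lt]
  · obtain ⟨d, rfl⟩ : ∃ d, j = d + 4 := ⟨j - 4, by omega⟩
    rw [summitMove_C_add_four P hi (by omega), show d + 4 + 1 = d + 1 + 4 by omega,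
      summitMove_C_add_four P hi (by omega)]
    exact hP d (by omega) (by omega)

theorem summitMove_not_mono (h : IsNormalizedSummit P i) {k : ℕ}
    (hP : ∀ j, 1 < j → j < k → ¬Mono (P.R j)) (hik : i < k) {j : ℕ} (hj₁ : 1 < j)
    (hj₂ : j < k + 4) (hj : j ≠ i + 1) (hj' : j ≠ i + 2) : ¬Mono ((summitMove P i).R j) := by
  rcases lt_or_ge j i with hji | hij
  · rw [vexp_R_of_le _ _ _ (by omega)]
    exact hP j hj₁ (by omega)
  rcases lt_or_ge j (i + 5) with hji' | hij'
  · obtain rfl | rfl | rfl : j = i ∨ j = i + 3 ∨ j = i + 4 := by omega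
    · rw [h.summitMove_R_self]
      exact not_mono_of_ne (a := 0) (b := 1) (by simp [h.R_one])
    · rw [h.summitMove_R_add_three]
      exact not_mono_of_ne (a := 0) (b := 1) (by simp [h.R_zero])
    · rw [h.summitMove_R_add_four]
      exact not_mono_of_ne (a := 0) (b := 1) (by simp [h.R_zero])
  · obtain ⟨d, rfl⟩ : ∃ d, j = d + 4 := ⟨j - 4, by omega⟩
    rw [h.summitMove_R_add_four_of_lt (by omega)]
    exact hP d (by have := h.two_le; omega) (by omega)

theorem card_summitMove_R_succ_self_add_two (h : IsNormalizedSummit P i) :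
    (Finset.univ.filter fun l => (summitMove P i).R (i + 1) l = true).card + 2 = P.height i := by
  have h₀ := card_filter_update_false_add_one h.R_zero
  have h₁ := card_filter_update_false_add_one (f := update (P.R i) 0 false) (a := 1)
    (by simp [h.R_one])
  rw [h.summitMove_R_succ_self, height]
  omega

theorem not_mono_summitMove_R_succ_self (h : IsNormalizedSummit P i) (hh : 3 ≤ P.height i) :
    ¬Mono ((summitMove P i).R (i + 1)) := by
  have hpos : 0 < (Finset.univ.filter fun l => (summitMove P i).R (i + 1) l = true).card := by
    have := h.card_summitMove_R_succ_self_add_two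
    omega
  obtain ⟨l, hl⟩ := Finset.card_pos.1 hpos
  refine not_mono_of_ne (a := l) (b := 0) ?_
  rw [(Finset.mem_filter.1 hl).2, h.summitMove_R_succ_self]
  simp

theorem summitMove_R_succ_self_eq_false (h : IsNormalizedSummit P i) (hh : P.height i = 2)
    (l : Fin (n + 2 + 1)) : (summitMove P i).R (i + 1) l = false := by
  have hzero : (Finset.univ.filter fun l => (summitMove P i).R (i + 1) l = true).card = 0 := by
    have := h.card_summitMove_R_succ_self_add_two
    omega
  have hempty := Finset.card_eq_zero.1 hzero
  simpa using Finset.filter_eq_empty_iff.1 hempty (Finset.mem_univ l)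

theorem atomicOn_summitMove_of_three_le_height (h : IsNormalizedSummit P i) {k : ℕ}
    (hP : P.Atomic k) (hik : i < k) (hh : 3 ≤ P.height i) :
    (summitMove P i).AtomicOn 1 (k + 4) := by
  obtain ⟨hNBF, hk, -, hR₁, hRk, hmono⟩ := hP
  refine ⟨fun j hj₁ hj₂ => h.summitMove_noBackFlip hNBF hik j hj₁ (by omega),
    by simpa using hk.add (by decide : Even 4), by omega, ?_, ?_, fun j hj₁ hj₂ => ?_⟩
  · rw [vexp_R_of_le _ _ _ (by have := h.two_le; omega)]
    exact hR₁
  · rw [h.summitMove_R_add_four_of_lt hik]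
    exact hRk
  · by_cases hj : j = i + 1
    · exact hj ▸ h.not_mono_summitMove_R_succ_self hh
    by_cases hj' : j = i + 2
    · rw [hj', h.summitMove_R_add_two]
      exact h.not_mono_summitMove_R_succ_self hh
    exact h.summitMove_not_mono hmono hik hj₁ hj₂ hj hj'

theorem atomicOn_summitMove_one_of_height_eq_two (h : IsNormalizedSummit P i) {k : ℕ}
    (hP : P.Atomic k) (hik : i < k) (hodd : Odd i) (hh : P.height i = 2) :
    (summitMove P i).AtomicOn 1 (i + 1) := by
  obtain ⟨hNBF, -, -, hR₁, -, hmono⟩ := hP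
  refine ⟨fun j hj₁ hj₂ => h.summitMove_noBackFlip hNBF hik j hj₁ (by omega),
    by simpa using hodd.add_one, by have := h.two_le; omega, ?_,
    h.summitMove_R_succ_self_eq_false hh,
    fun j hj₁ hj₂ => h.summitMove_not_mono hmono hik hj₁ (by omega) (by omega) (by omega)⟩
  rw [vexp_R_of_le _ _ _ (by have := h.two_le; omega)]
  exact hR₁

theorem atomicOn_summitMove_of_height_eq_two (h : IsNormalizedSummit P i) {k : ℕ}
    (hP : P.Atomic k) (hik : i < k) (hodd : Odd i) (hh : P.height i = 2) :
    (summitMove P i).AtomicOn (i + 2) (k + 4) := by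
  obtain ⟨hNBF, ⟨a, ha⟩, -, -, hRk, hmono⟩ := hP
  obtain ⟨b, hb⟩ := hodd
  refine ⟨fun j hj₁ hj₂ => h.summitMove_noBackFlip hNBF hik j (by omega) (by omega),
    ⟨a + 1 - b, by omega⟩, by omega, ?_, ?_,
    fun j hj₁ hj₂ => h.summitMove_not_mono hmono hik (by omega) hj₂ (by omega) (by omega)⟩
  · rw [h.summitMove_R_add_two]
    exact h.summitMove_R_succ_self_eq_false hh
  · rw [h.summitMove_R_add_four_of_lt hik]
    exact hRk

end IsNormalizedSummit

end SummitMove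

theorem summit_move_admissible_general (n k : ℕ) (hn : 2 ≤ n) (P : SPath n) (hP : P.Atomic k)
    (i : ℕ) (hodd : Odd i) (hi1 : 2 ≤ i) (hik : i + 1 ≤ k)
    (hsum2 : P.height (i + 1) < P.height i)
    (hC1 : P.C (i - 1) = 0) (hV1 : P.V (i - 1) = true)
    (hC2 : P.C i = 1)
    (he2 : P.R i 2 = false) :
    SPath.Admissible (P.vexp i (summitD P i) (summitQ n) 6) (k + 4) ∧
    (3 ≤ P.height i → SPath.Atomic (P.vexp i (summitD P i) (summitQ n) 6) (k + 4)) ∧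
    (P.height i = 2 →
      SPath.Atomic ((P.vexp i (summitD P i) (summitQ n) 6).sub 1) (i + 1) ∧
      SPath.Atomic ((P.vexp i (summitD P i) (summitQ n) 6).sub (i + 2)) (k + 3 - i)) := by
  obtain ⟨n, rfl⟩ := Nat.exists_eq_add_of_le' hn
  have hi : 1 ≤ i := one_le_two.trans hi1
  have h : IsNormalizedSummit P i :=
    { two_le := hi1
      C_pred := hC1
      C_self := hC2
      R_zero := by
        simpa [Nat.sub_add_cancel hi, hC1, hV1] using P.R_succ_apply_C (j := i - 1) (by omega)
      R_one := hC2 ▸ P.R_apply_C_of_height_succ_lt hi hsum2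
      R_two := he2 }
  have hcard := h.card_summitMove_R_succ_self_add_two
  rcases (show P.height i = 2 ∨ 3 ≤ P.height i by omega) with hh | hh
  · have h₁ := h.atomicOn_summitMove_one_of_height_eq_two hP hik hodd hh
    have h₂ := h.atomicOn_summitMove_of_height_eq_two hP hik hodd hh
    refine ⟨h₁.admissible_append h₂, fun h3 => absurd h3 (by omega), fun _ => ⟨?_, ?_⟩⟩
    · simpa using (SPath.atomic_sub_iff le_rfl).2 h₁
    · simpa [show k + 4 + 1 - (i + 2) = k + 3 - i by omega]
        using (SPath.atomic_sub_iff (by omega)).2 h₂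
  · have h' := h.atomicOn_summitMove_of_three_le_height hP hik hh
    exact ⟨h'.admissible, fun _ => SPath.atomicOn_one_iff.1 h', fun h2 => absurd h2 (by omega)⟩

/-- the summit move at an odd summit `i` of an atomic path `P`
(normalized so that `(C_{i-1}, V_{i-1}) = (0,1)`, `(C_i, V_i) = (1,0)`, `R^i(P)_2 = 0`)
yields an admissible path: atomic if `h_i(P) ≥ 3`, and a concatenation of the two
atomic paths `P~[1, i+1]` and `P~[i+2, k+4]` if `h_i(P) = 2`. -/
theorem summit_move_admissible (n k : ℕ) (hn : 2 ≤ n) (P : SPath n) (hP : P.Atomic k)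
    (i : ℕ) (hodd : Odd i) (hi1 : 2 ≤ i) (hik : i + 1 ≤ k)
    (hsum1 : P.height (i - 1) < P.height i) (hsum2 : P.height (i + 1) < P.height i)
    (hC1 : P.C (i - 1) = 0) (hV1 : P.V (i - 1) = true)
    (hC2 : P.C i = 1) (hV2 : P.V i = false)
    (he2 : P.R i 2 = false) :
    SPath.Admissible (P.vexp i (summitD P i) (summitQ n) 6) (k + 4) ∧
    (3 ≤ P.height i → SPath.Atomic (P.vexp i (summitD P i) (summitQ n) 6) (k + 4)) ∧
    (P.height i = 2 →
      SPath.Atomic ((P.vexp i (summitD P i) (summitQ n) 6).sub 1) (i + 1) ∧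
      SPath.Atomic ((P.vexp i (summitD P i) (summitQ n) 6).sub (i + 2)) (k + 3 - i)) :=
  summit_move_admissible_general n k hn P hP i hodd hi1 hik hsum2 hC1 hV1 hC2 he2
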